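/- arXiv:1510.08748 — 6 statements merged into one kernel-verified Lean document; each statement's English description precedes it below -/
import Mathlib

section
/- For every m ≥ 0, the sum over i from 1 to 2^m of 2^(padicValNat 2 i) equals (m + 2) · 2^(m−1) when m ≥ 1, and equals 1 when m = 0. -/
/- Pairing i = 2j - 1 with i = 2j, the odd term contributes 1 and the even term twice the term
at j; hence the sum S(n) of 2 ^ v₂(i) over 1 ≤ i ≤ n satisfies S(2n) = n + 2 S(n), and this
recurrence along n = 2 ^ m gives 2 S(2 ^ m) = (m + 2) 2 ^ m. -/

lemma sum_Icc_two_mul_pow_padicValNat (n : ℕ) :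
    ∑ i ∈ Finset.Icc 1 (2 * n), 2 ^ padicValNat 2 i
      = n + 2 * ∑ i ∈ Finset.Icc 1 n, 2 ^ padicValNat 2 i := by
  induction n with
  | zero => simp
  | succ k ih =>
    have h_odd : padicValNat 2 (2 * k + 1) = 0 := padicValNat.eq_zero_of_not_dvd (by omega)
    have h_even : padicValNat 2 (2 * (k + 1)) = 1 + padicValNat 2 (k + 1) := by
      rw [padicValNat.mul two_ne_zero k.succ_ne_zero, padicValNat.self one_lt_two]
    rw [show 2 * (k + 1) = 2 * k + 1 + 1 by ring, Finset.sum_Icc_succ_top (by omega),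
      Finset.sum_Icc_succ_top (by omega), ih, Finset.sum_Icc_succ_top (by omega), h_odd,
      show 2 * k + 1 + 1 = 2 * (k + 1) by ring, h_even, pow_add]
    ring

lemma two_mul_sum_Icc_pow_padicValNat_two_pow (m : ℕ) :
    2 * ∑ i ∈ Finset.Icc 1 (2 ^ m), 2 ^ padicValNat 2 i = (m + 2) * 2 ^ m := by
  induction m with
  | zero => simp
  | succ m ih =>
    rw [pow_succ', sum_Icc_two_mul_pow_padicValNat, mul_add, ih]
    ring

theorem stmt5 (m : ℕ) :
    ∑ i ∈ Finset.Icc 1 (2 ^ m), 2 ^ padicValNat 2 i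
      = if m = 0 then 1 else (m + 2) * 2 ^ (m - 1) := by
  cases m with
  | zero => simp
  | succ m =>
    have h : 2 * ∑ i ∈ Finset.Icc 1 (2 ^ (m + 1)), 2 ^ padicValNat 2 i
        = 2 * ((m + 1 + 2) * 2 ^ m) := by
      rw [two_mul_sum_Icc_pow_padicValNat_two_pow]
      ring
    simpa using Nat.eq_of_mul_eq_mul_left two_pos h
end

section
/- For every n ≥ 1, the sum over i from 1 to n of 2^(padicValNat 2 i) is at most n · (Nat.log 2 n + 2). -/
/-!
Write `S n = ∑ i ∈ Icc 1 n, p ^ padicValNat p i` for a prime `p`. Every `i` not divisible by `p`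
contributes `1`, and the multiples `p * k` with `k ≤ n / p` contribute `p` times the terms of
`S (n / p)`. Hence `S n ≤ n + p * S (n / p)`, and induction on `n` together with
`Nat.log p (n / p) = Nat.log p n - 1` gives `S n ≤ n * (Nat.log p n + 2)`.
-/

open Finset

namespace Nat

lemma Icc_filter_dvd_eq_image_mul (p n : ℕ) :
    {i ∈ Icc 1 n | p ∣ i} = (Icc 1 (n / p)).image (p * ·) := by
  ext i
  simp only [mem_filter, mem_Icc, mem_image]
  constructor
  · rintro ⟨⟨hi, hin⟩, k, rfl⟩
    refine ⟨k, ⟨Nat.pos_of_mul_pos_left hi, ?_⟩, rfl⟩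
    exact (Nat.le_div_iff_mul_le (Nat.pos_of_mul_pos_right hi)).2 (by rwa [mul_comm])
  · rintro ⟨k, ⟨hk, hkn⟩, rfl⟩
    have hp : p ≠ 0 := by rintro rfl; simp at hkn; omega
    exact ⟨⟨Nat.mul_pos (Nat.pos_of_ne_zero hp) hk,
      (Nat.mul_le_mul_left p hkn).trans (Nat.mul_div_le n p)⟩, dvd_mul_right p k⟩

lemma mul_div_mul_log_div_add_two_le {b : ℕ} (hb : 1 < b) (n : ℕ) :
    b * (n / b * (log b (n / b) + 2)) ≤ n * (log b n + 1) := by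
  rcases (n / b).eq_zero_or_pos with h | h
  · simp [h]
  have hlog : log b (n / b) + 2 = log b n + 1 := by
    have := log_pos hb ((Nat.div_pos_iff.1 h).2)
    rw [log_div_base]
    omega
  rw [hlog, ← mul_assoc]
  exact Nat.mul_le_mul_right _ (Nat.mul_div_le n b)

lemma sum_Icc_filter_not_dvd_pow_padicValNat_le (p n : ℕ) :
    ∑ i ∈ Icc 1 n with ¬p ∣ i, p ^ padicValNat p i ≤ n :=
  calc ∑ i ∈ Icc 1 n with ¬p ∣ i, p ^ padicValNat p i
      = #{i ∈ Icc 1 n | ¬p ∣ i} := by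
        rw [card_eq_sum_ones]
        refine sum_congr rfl fun i hi => ?_
        rw [padicValNat.eq_zero_of_not_dvd (mem_filter.1 hi).2, pow_zero]
    _ ≤ #(Icc 1 n) := card_filter_le _ _
    _ = n := by simp

variable {p : ℕ} [hp : Fact p.Prime]

lemma sum_Icc_filter_dvd_pow_padicValNat (n : ℕ) :
    ∑ i ∈ Icc 1 n with p ∣ i, p ^ padicValNat p i =
      p * ∑ k ∈ Icc 1 (n / p), p ^ padicValNat p k := by
  rw [Icc_filter_dvd_eq_image_mul, sum_image fun _ _ _ _ => Nat.eq_of_mul_eq_mul_left hp.out.pos,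
    mul_sum]
  refine sum_congr rfl fun k hk => ?_
  rw [padicValNat.mul hp.out.ne_zero (by grind), padicValNat.self hp.out.one_lt, pow_add, pow_one]

lemma sum_Icc_pow_padicValNat_le_add_mul (n : ℕ) :
    ∑ i ∈ Icc 1 n, p ^ padicValNat p i ≤ n + p * ∑ k ∈ Icc 1 (n / p), p ^ padicValNat p k := by
  rw [← sum_filter_add_sum_filter_not _ (p ∣ ·), sum_Icc_filter_dvd_pow_padicValNat, add_comm]
  exact Nat.add_le_add_right (sum_Icc_filter_not_dvd_pow_padicValNat_le p n) _

lemma sum_Icc_pow_padicValNat_le_mul_log_add_two (n : ℕ) :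
    ∑ i ∈ Icc 1 n, p ^ padicValNat p i ≤ n * (log p n + 2) := by
  induction n using Nat.strong_induction_on with
  | _ n ih =>
  rcases n.eq_zero_or_pos with rfl | hn
  · simp
  calc ∑ i ∈ Icc 1 n, p ^ padicValNat p i
      ≤ n + p * ∑ k ∈ Icc 1 (n / p), p ^ padicValNat p k := sum_Icc_pow_padicValNat_le_add_mul n
    _ ≤ n + p * (n / p * (log p (n / p) + 2)) := by
        gcongr
        exact ih _ (Nat.div_lt_self hn hp.out.one_lt)
    _ ≤ n + n * (log p n + 1) :=
        Nat.add_le_add_left (mul_div_mul_log_div_add_two_le hp.out.one_lt n) n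
    _ = n * (log p n + 2) := by ring

end Nat

theorem stmt6_general (n : ℕ) :
    ∑ i ∈ Finset.Icc 1 n, 2 ^ padicValNat 2 i ≤ n * (Nat.log 2 n + 2) :=
  Nat.sum_Icc_pow_padicValNat_le_mul_log_add_two n

theorem stmt6 (n : ℕ) (hn : 1 ≤ n) :
    ∑ i ∈ Finset.Icc 1 n, 2 ^ padicValNat 2 i ≤ n * (Nat.log 2 n + 2) :=
  stmt6_general n
end

section
/- Fix a cap c ≥ 0 and define levelC(i) = min(c, padicValNat 2 i) for positive integers i. Then for every n ≥ 1, the sum over i from 1 to n of 2^(levelC(i)) is at most n · (c + 2). -/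
/-! Write `2 ^ min c v = 1 + ∑_{j < min c v} 2 ^ j` and exchange the order of summation: the level
`j < c` is passed by exactly the `n / 2 ^ (j + 1)` multiples of `2 ^ (j + 1)` in `[1, n]`, each
contributing `2 ^ j`, so each of the `c` levels adds at most `n`. -/

open Finset

lemma Nat.two_pow_eq_one_add_sum_range (m : ℕ) : 2 ^ m = 1 + ∑ j ∈ range m, 2 ^ j := by
  rw [Nat.geomSum_eq le_rfl, Nat.div_one]
  have := m.one_le_two_pow
  omega

lemma two_pow_min_eq_one_add_sum_ite (c v : ℕ) :
    2 ^ min c v = 1 + ∑ j ∈ range c, if j < v then 2 ^ j else 0 := by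
  have hfilter : {j ∈ range c | j < v} = range (min c v) := by
    ext j
    simp only [mem_filter, mem_range]
    omega
  rw [← sum_filter, hfilter, Nat.two_pow_eq_one_add_sum_range]

lemma lt_padicValNat_two_iff_dvd {i : ℕ} (hi : i ≠ 0) (j : ℕ) :
    j < padicValNat 2 i ↔ 2 ^ (j + 1) ∣ i := by
  rw [padicValNat_dvd_iff_le hi, Nat.succ_le_iff]

lemma card_filter_lt_padicValNat_two (n j : ℕ) :
    #{i ∈ Icc 1 n | j < padicValNat 2 i} = n / 2 ^ (j + 1) := by
  rw [← Nat.Ioc_filter_dvd_card_eq_div]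
  congr 1
  refine filter_congr fun i hi => lt_padicValNat_two_iff_dvd ?_ j
  exact Nat.one_le_iff_ne_zero.mp (mem_Icc.mp hi).1

lemma sum_Icc_two_pow_min_padicValNat (c n : ℕ) :
    ∑ i ∈ Icc 1 n, 2 ^ min c (padicValNat 2 i) = n + ∑ j ∈ range c, n / 2 ^ (j + 1) * 2 ^ j := by
  simp_rw [two_pow_min_eq_one_add_sum_ite, sum_add_distrib, sum_const, Nat.card_Icc,
    smul_eq_mul, mul_one, Nat.add_sub_cancel]
  rw [sum_comm]
  congr 1
  refine sum_congr rfl fun j _ => ?_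
  rw [← sum_filter, sum_const, card_filter_lt_padicValNat_two, smul_eq_mul]

lemma div_two_pow_succ_mul_two_pow_le (n j : ℕ) : n / 2 ^ (j + 1) * 2 ^ j ≤ n :=
  calc n / 2 ^ (j + 1) * 2 ^ j ≤ n / 2 ^ (j + 1) * 2 ^ (j + 1) := by gcongr <;> omega
    _ ≤ n := Nat.div_mul_le_self _ _

theorem stmt7_general (c n : ℕ) :
    ∑ i ∈ Finset.Icc 1 n, 2 ^ min c (padicValNat 2 i) ≤ n * (c + 2) := by
  rw [sum_Icc_two_pow_min_padicValNat]
  calc n + ∑ j ∈ range c, n / 2 ^ (j + 1) * 2 ^ j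
      ≤ n + ∑ _j ∈ range c, n := by gcongr with j; exact div_two_pow_succ_mul_two_pow_le n j
    _ = n + c * n := by rw [sum_const, card_range, smul_eq_mul]
    _ ≤ n * (c + 2) := by nlinarith

theorem stmt7 (c n : ℕ) (hn : 1 ≤ n) :
    ∑ i ∈ Finset.Icc 1 n, 2 ^ min c (padicValNat 2 i) ≤ n * (c + 2) :=
  stmt7_general c n
end

section
/- Define f(s) = s + 2^(padicValNat 2 s). For every positive integer s ≤ n, the number of iterations j such that f^[j](s) ≤ n is at most Nat.log 2 n + 1. -/
/-!
Write `s = 2^v * k` with `k` odd. Then `s + 2^v = 2^v * (k + 1)` with `k + 1` even, so each step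
raises the 2-adic valuation by at least one, and after `j` steps it is at least `j`. A value `x ≤ n`
has `2^v ≤ x ≤ n` for its valuation `v`, so only the steps `j ≤ Nat.log 2 n` can end at a value `≤ n`.
-/

def twoAdicStep (x : ℕ) : ℕ := x + 2 ^ padicValNat 2 x

lemma twoAdicStep_ne_zero (x : ℕ) : twoAdicStep x ≠ 0 := by
  unfold twoAdicStep
  positivity

lemma padicValNat_lt_padicValNat_twoAdicStep {x : ℕ} (hx : x ≠ 0) :
    padicValNat 2 x < padicValNat 2 (twoAdicStep x) := by
  set v := padicValNat 2 x
  obtain ⟨k, hk⟩ : 2 ^ v ∣ x := pow_padicValNat_dvd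
  have hk_odd : ¬ 2 ∣ k := fun h2k =>
    pow_succ_padicValNat_not_dvd hx (hk ▸ pow_succ 2 v ▸ mul_dvd_mul_left _ h2k)
  have hdvd : 2 ^ (v + 1) ∣ twoAdicStep x := by
    have hstep : twoAdicStep x = 2 ^ v * (k + 1) := by rw [mul_add_one, ← hk]; rfl
    rw [hstep, pow_succ]
    exact mul_dvd_mul_left _ (by omega)
  exact (padicValNat_dvd_iff_le (twoAdicStep_ne_zero x)).mp hdvd

lemma iterate_twoAdicStep_ne_zero {s : ℕ} (hs : s ≠ 0) : ∀ j, twoAdicStep^[j] s ≠ 0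
  | 0 => hs
  | j + 1 => by
    rw [Function.iterate_succ_apply']
    exact twoAdicStep_ne_zero _

lemma le_padicValNat_iterate_twoAdicStep {s : ℕ} (hs : s ≠ 0) (j : ℕ) :
    j ≤ padicValNat 2 (twoAdicStep^[j] s) := by
  induction j with
  | zero => exact Nat.zero_le _
  | succ j ih =>
    rw [Function.iterate_succ_apply']
    have := padicValNat_lt_padicValNat_twoAdicStep (iterate_twoAdicStep_ne_zero hs j)
    omega

lemma le_log_of_iterate_twoAdicStep_le {n s j : ℕ} (hs : s ≠ 0) (hj : twoAdicStep^[j] s ≤ n) :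
    j ≤ Nat.log 2 n :=
  calc j ≤ padicValNat 2 (twoAdicStep^[j] s) := le_padicValNat_iterate_twoAdicStep hs j
    _ ≤ Nat.log 2 (twoAdicStep^[j] s) := padicValNat_le_nat_log _
    _ ≤ Nat.log 2 n := Nat.log_mono_right hj

theorem stmt9_general (n s : ℕ) (hs : 0 < s) :
    Set.ncard {j : ℕ | (fun x => x + 2 ^ padicValNat 2 x)^[j] s ≤ n}
      ≤ Nat.log 2 n + 1 := by
  change Set.ncard {j : ℕ | twoAdicStep^[j] s ≤ n} ≤ Nat.log 2 n + 1
  have hsub : {j : ℕ | twoAdicStep^[j] s ≤ n} ⊆ ↑(Finset.range (Nat.log 2 n + 1)) :=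
    fun j hj => by
      simpa [Nat.lt_succ_iff] using le_log_of_iterate_twoAdicStep_le hs.ne' hj
  calc Set.ncard {j : ℕ | twoAdicStep^[j] s ≤ n}
      ≤ Set.ncard (↑(Finset.range (Nat.log 2 n + 1)) : Set ℕ) :=
        Set.ncard_le_ncard hsub (Finset.finite_toSet _)
    _ = Nat.log 2 n + 1 := by rw [Set.ncard_coe_finset, Finset.card_range]

theorem stmt9 (n s : ℕ) (hs : 0 < s) (hsn : s ≤ n) :
    Set.ncard {j : ℕ | (fun x => x + 2 ^ padicValNat 2 x)^[j] s ≤ n}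
      ≤ Nat.log 2 n + 1 :=
  stmt9_general n s hs
end

section
/- Let k ≥ 2, c ≥ 0, and define levelC_k(i) = min(c, largest x with k^x ∣ i) for positive i. Then for every n ≥ 1, the sum over i from 1 to n of k^(levelC_k(i) + 1) is at most n · k · (c + 1). -/
open Finset

lemma pow_le_sum_range_ite_pow_dvd {k c m i : ℕ} (hm : m ≤ c) (hdvd : k ^ m ∣ i) :
    k ^ m ≤ ∑ j ∈ range (c + 1), if k ^ j ∣ i then k ^ j else 0 :=
  calc k ^ m = if k ^ m ∣ i then k ^ m else 0 := (if_pos hdvd).symm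
    _ ≤ _ := single_le_sum (f := fun j ↦ if k ^ j ∣ i then k ^ j else 0)
        (fun _ _ ↦ Nat.zero_le _) (mem_range_succ_iff.mpr hm)

lemma sum_Icc_ite_dvd_le (d n : ℕ) : ∑ i ∈ Icc 1 n, (if d ∣ i then d else 0) ≤ n := by
  have hcard : #{i ∈ Icc 1 n | d ∣ i} = n / d := Nat.Ioc_filter_dvd_card_eq_div n d
  rw [← sum_filter, sum_const, smul_eq_mul, hcard]
  exact Nat.div_mul_le_self n d

/-- Each `i` is charged to the single level `j = min c (padicValNat k i)`, and the multiples of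
`k ^ j` in `[1, n]` contribute at most `n` in total at level `j`. -/
lemma sum_Icc_pow_min_padicValNat_le (k c n : ℕ) :
    ∑ i ∈ Icc 1 n, k ^ min c (padicValNat k i) ≤ n * (c + 1) :=
  calc ∑ i ∈ Icc 1 n, k ^ min c (padicValNat k i)
      ≤ ∑ i ∈ Icc 1 n, ∑ j ∈ range (c + 1), if k ^ j ∣ i then k ^ j else 0 :=
        sum_le_sum fun i _ ↦ pow_le_sum_range_ite_pow_dvd (min_le_left _ _)
          ((pow_dvd_pow k (min_le_right _ _)).trans pow_padicValNat_dvd)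
    _ = ∑ j ∈ range (c + 1), ∑ i ∈ Icc 1 n, if k ^ j ∣ i then k ^ j else 0 := sum_comm
    _ ≤ ∑ _j ∈ range (c + 1), n := sum_le_sum fun j _ ↦ sum_Icc_ite_dvd_le (k ^ j) n
    _ = n * (c + 1) := by rw [sum_const, card_range, smul_eq_mul, mul_comm]

theorem stmt12_general (k c n : ℕ) :
    ∑ i ∈ Finset.Icc 1 n, k ^ (min c (Nat.maxPowDiv k i) + 1) ≤ n * k * (c + 1) :=
  -- `Nat.maxPowDiv` is a deprecated alias of `padicValNat`.
  calc ∑ i ∈ Icc 1 n, k ^ (min c (padicValNat k i) + 1)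
      = (∑ i ∈ Icc 1 n, k ^ min c (padicValNat k i)) * k := by simp only [pow_succ, sum_mul]
    _ ≤ n * (c + 1) * k := Nat.mul_le_mul_right k (sum_Icc_pow_min_padicValNat_le k c n)
    _ = n * k * (c + 1) := by ring

theorem stmt12 (k c n : ℕ) (hk : 2 ≤ k) (hn : 1 ≤ n) :
    ∑ i ∈ Finset.Icc 1 n, k ^ (min c (Nat.maxPowDiv k i) + 1) ≤ n * k * (c + 1) :=
  stmt12_general k c n
end

section
/- Define the diagonal level of a pair (i, j) of positive integers as padicValNat 2 (min i j), and define the successor of (i, j) along its diagonal as (i + d, j + d) where d = 2^(padicValNat 2 (min i j)). Then the successor is the smallest pair (i+k, j+k) with k > 0 whose diagonal level strictly exceeds that of (i, j). -/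
theorem stmt17 (i j : ℕ) (hi : 0 < i) (hj : 0 < j) :
    IsLeast {k : ℕ | 0 < k ∧
        padicValNat 2 (min i j) < padicValNat 2 (min (i + k) (j + k))}
      (2 ^ padicValNat 2 (min i j)) := by
  set m := min i j with hm
  have hm0 : 0 < m := lt_min hi hj
  set v := padicValNat 2 m with hv
  have hdvd : 2 ^ v ∣ m := pow_padicValNat_dvd
  obtain ⟨b, hb⟩ := hdvd
  have hbodd : ¬ (2 ∣ b) := by
    intro ⟨c, hc⟩
    have h2 : 2 ^ (v + 1) ∣ m := ⟨c, by rw [hb, hc]; ring⟩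
    rw [padicValNat_dvd_iff_le hm0.ne'] at h2
    omega
  have hb0 : 0 < b := by
    rcases Nat.eq_zero_or_pos b with h | h
    · simp [h] at hb; omega
    · exact h
  constructor
  · refine ⟨pow_pos (by norm_num) v, ?_⟩
    rw [min_add_add_right, ← hm]
    have heq : m + 2 ^ v = 2 ^ v * (b + 1) := by rw [hb]; ring
    obtain ⟨c, hc⟩ : 2 ∣ b + 1 := by omega
    have h2 : 2 ^ (v + 1) ∣ m + 2 ^ v := ⟨c, by rw [heq, hc]; ring⟩
    rw [padicValNat_dvd_iff_le (by positivity)] at h2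
    omega
  · rintro k ⟨hk0, hk⟩
    rw [min_add_add_right, ← hm] at hk
    have hd : 2 ^ (v + 1) ∣ m + k := by
      rw [padicValNat_dvd_iff_le (by omega)]; omega
    have hdk : 2 ^ v ∣ k := (Nat.dvd_add_right ⟨b, hb⟩).mp
      (dvd_trans (pow_dvd_pow 2 (Nat.le_succ v)) hd)
    exact Nat.le_of_dvd hk0 hdk
end
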